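/- Let Ẑ be a strictly positive random variable with E[Ẑ] = Z > 0, such that log Ẑ is integrable, and let δ = log Z − E[log Ẑ] ≥ 0. Then the mean absolute deviation of log Ẑ is bounded: E[|log Ẑ − E[log Ẑ]|] ≤ 2 + 2δ. -/

import Mathlib

/-!
Since `log Ẑ - E[log Ẑ]` has mean zero, its mean absolute deviation is twice the mean of its
positive part. Now `log Ẑ - E[log Ẑ] = log (Ẑ / Z) + δ`, where `δ ≥ 0` by integrating the tangent
line bound `log x ≤ log Z + x / Z - 1`; as `log x ≤ x`, the positive part is at most `Ẑ / Z + δ`,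
whose mean is `1 + δ`.
-/

open MeasureTheory ProbabilityTheory Real

section

variable {Ω : Type*} [MeasurableSpace Ω] {μ : Measure Ω}

theorem integral_pos_of_ae_pos [NeZero μ] {X : Ω → ℝ} (hX_pos : ∀ᵐ ω ∂μ, 0 < X ω)
    (hX : Integrable X μ) : 0 < ∫ ω, X ω ∂μ := by
  refine (integral_pos_iff_support_of_nonneg_ae (hX_pos.mono fun _ h ↦ h.le) hX).mpr ?_
  refine pos_iff_ne_zero.mpr fun h ↦ ?_
  obtain ⟨ω, hω, hω'⟩ := (hX_pos.and (measure_eq_zero_iff_ae_notMem.mp h)).exists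
  exact hω' hω.ne'

theorem integral_abs_eq_two_mul_integral_posPart {Y : Ω → ℝ} (hY : Integrable Y μ)
    (h₀ : ∫ ω, Y ω ∂μ = 0) : ∫ ω, |Y ω| ∂μ = 2 * ∫ ω, (Y ω)⁺ ∂μ := by
  have hY_pos : Integrable (fun ω ↦ (Y ω)⁺) μ := hY.pos_part
  have abs_eq : ∀ ω, |Y ω| = 2 * (Y ω)⁺ - Y ω := fun ω ↦ by
    linarith [add_abs_eq_two_nsmul_posPart (Y ω), two_nsmul ((Y ω)⁺)]
  simp_rw [abs_eq]
  rw [integral_sub (hY_pos.const_mul 2) hY, integral_const_mul, h₀, sub_zero]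

theorem integral_abs_sub_integral_eq_two_mul_integral_posPart [IsProbabilityMeasure μ]
    {X : Ω → ℝ} (hX : Integrable X μ) :
    ∫ ω, |X ω - ∫ ω', X ω' ∂μ| ∂μ = 2 * ∫ ω, (X ω - ∫ ω', X ω' ∂μ)⁺ ∂μ :=
  integral_abs_eq_two_mul_integral_posPart (hX.sub (integrable_const _)) (by simp [integral_sub hX])

theorem integral_log_le_log_integral [IsProbabilityMeasure μ] {X : Ω → ℝ}
    (hX_pos : ∀ᵐ ω ∂μ, 0 < X ω) (hX : Integrable X μ) (hlogX : Integrable (fun ω ↦ log (X ω)) μ) :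
    ∫ ω, log (X ω) ∂μ ≤ log (∫ ω, X ω ∂μ) := by
  set m := ∫ ω, X ω ∂μ
  have hm : 0 < m := integral_pos_of_ae_pos hX_pos hX
  have tangent_line : ∀ᵐ ω ∂μ, log (X ω) ≤ log m - 1 + X ω / m := by
    filter_upwards [hX_pos] with ω hω
    have := log_le_sub_one_of_pos (div_pos hω hm)
    rw [log_div hω.ne' hm.ne'] at this
    linarith
  have hline : Integrable (fun ω ↦ log m - 1 + X ω / m) μ :=
    (integrable_const _).add (hX.div_const m)
  calc ∫ ω, log (X ω) ∂μ ≤ ∫ ω, log m - 1 + X ω / m ∂μ :=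
        integral_mono_ae hlogX hline tangent_line
    _ = log m := by
      rw [integral_add (integrable_const _) (hX.div_const m), integral_div, div_self hm.ne']
      simp

theorem posPart_log_add_le {x δ : ℝ} (hx : 0 < x) (hδ : 0 ≤ δ) : (log x + δ)⁺ ≤ x + δ :=
  sup_le (by linarith [log_le_self hx.le]) (by linarith)

theorem integral_posPart_log_sub_integral_le [IsProbabilityMeasure μ] {X : Ω → ℝ}
    (hX_pos : ∀ᵐ ω ∂μ, 0 < X ω) (hX : Integrable X μ) (hlogX : Integrable (fun ω ↦ log (X ω)) μ) :
    ∫ ω, (log (X ω) - ∫ ω', log (X ω') ∂μ)⁺ ∂μ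
      ≤ 1 + (log (∫ ω, X ω ∂μ) - ∫ ω, log (X ω) ∂μ) := by
  set m := ∫ ω, X ω ∂μ
  have hm : 0 < m := integral_pos_of_ae_pos hX_pos hX
  set δ := log m - ∫ ω, log (X ω) ∂μ
  have hδ : 0 ≤ δ := sub_nonneg.mpr (integral_log_le_log_integral hX_pos hX hlogX)
  have pointwise : ∀ᵐ ω ∂μ, (log (X ω) - ∫ ω', log (X ω') ∂μ)⁺ ≤ X ω / m + δ := by
    filter_upwards [hX_pos] with ω hω
    have hsplit : log (X ω) - ∫ ω', log (X ω') ∂μ = log (X ω / m) + δ := by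
      rw [log_div hω.ne' hm.ne']
      ring
    rw [hsplit]
    exact posPart_log_add_le (div_pos hω hm) hδ
  calc ∫ ω, (log (X ω) - ∫ ω', log (X ω') ∂μ)⁺ ∂μ ≤ ∫ ω, X ω / m + δ ∂μ :=
        integral_mono_ae (hlogX.sub (integrable_const _)).pos_part
          ((hX.div_const m).add (integrable_const δ)) pointwise
    _ = 1 + δ := by
      rw [integral_add (hX.div_const m) (integrable_const δ), integral_div, div_self hm.ne']
      simp

theorem integral_abs_log_sub_integral_le [IsProbabilityMeasure μ] {X : Ω → ℝ}
    (hX_pos : ∀ᵐ ω ∂μ, 0 < X ω) (hX : Integrable X μ) (hlogX : Integrable (fun ω ↦ log (X ω)) μ) :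
    ∫ ω, |log (X ω) - ∫ ω', log (X ω') ∂μ| ∂μ
      ≤ 2 + 2 * (log (∫ ω, X ω ∂μ) - ∫ ω, log (X ω) ∂μ) := by
  rw [integral_abs_sub_integral_eq_two_mul_integral_posPart hlogX]
  linarith [integral_posPart_log_sub_integral_le hX_pos hX hlogX]

end

theorem mad_log_estimator_bound_general
    {Ω : Type*} [MeasureSpace Ω] [IsProbabilityMeasure (ℙ : Measure Ω)]
    (Zhat : Ω → ℝ) (Z : ℝ)
    (hpos : ∀ ω, 0 < Zhat ω)
    (hint : Integrable Zhat)
    (hmean : ∫ ω, Zhat ω = Z)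
    (hlogint : Integrable (fun ω => Real.log (Zhat ω)))
    (δ : ℝ) (hδ : δ = Real.log Z - ∫ ω, Real.log (Zhat ω)) :
    ∫ ω, |Real.log (Zhat ω) - ∫ ω', Real.log (Zhat ω')| ≤ 2 + 2 * δ := by
  subst hmean hδ
  exact integral_abs_log_sub_integral_le (.of_forall hpos) hint hlogint

/-- For a strictly positive unbiased estimator `Ẑ` of `Z > 0` with
`log Ẑ` integrable and bias `δ = log Z - E[log Ẑ]`, the mean absolute deviation
of `log Ẑ` satisfies `E[|log Ẑ - E[log Ẑ]|] ≤ 2 + 2δ`. -/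
theorem mad_log_estimator_bound
    {Ω : Type*} [MeasureSpace Ω] [IsProbabilityMeasure (ℙ : Measure Ω)]
    (Zhat : Ω → ℝ) (Z : ℝ) (hZ : 0 < Z)
    (hmeas : Measurable Zhat)
    (hpos : ∀ ω, 0 < Zhat ω)
    (hint : Integrable Zhat)
    (hmean : ∫ ω, Zhat ω = Z)
    (hlogint : Integrable (fun ω => Real.log (Zhat ω)))
    (δ : ℝ) (hδ : δ = Real.log Z - ∫ ω, Real.log (Zhat ω)) :
    ∫ ω, |Real.log (Zhat ω) - ∫ ω', Real.log (Zhat ω')| ≤ 2 + 2 * δ :=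
  mad_log_estimator_bound_general Zhat Z hpos hint hmean hlogint δ hδ
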